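/- arXiv:1011.0796 — 2 statements merged into one kernel-verified Lean document; each statement's English description precedes it below -/
import Mathlib

section
/- Two trees T and T′ are cospectral with respect to the Laplacian matrix if and only if their line graphs L(T) and L(T′) are cospectral with respect to the adjacency matrix. -/
/-!
A tree is bipartite, so conjugating by the `±1` diagonal matrix of a 2-colouring turns its
Laplacian `D - A` into the signless Laplacian `D + A = N Nᵀ`, where `N` is the vertex-edge
incidence matrix; on the other side `Nᵀ N = A(L(T)) + 2`. A tree has one vertex more than it has
edges, so `χ(N Nᵀ) = X * χ(Nᵀ N)`, i.e. `χ(D - A)(x) = x * χ(A(L(T)))(x - 2)`, and this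
relation determines either characteristic polynomial from the other.
-/

open SimpleGraph

/-- Characteristic polynomial of the Laplacian matrix `L(G) = D(G) - A(G)` of a finite
graph `G`; two graphs are Laplacian-cospectral iff these polynomials coincide. -/
noncomputable def lapCharpoly {V : Type*} [Fintype V] [DecidableEq V] (G : SimpleGraph V) :
    Polynomial ℝ :=
  letI := Classical.decRel G.Adj
  (G.lapMatrix ℝ).charpoly

/-- Characteristic polynomial of the adjacency matrix of a finite graph `G`; two graphs are
adjacency-cospectral iff these polynomials coincide. -/
noncomputable def adjCharpoly {V : Type*} [Fintype V] [DecidableEq V] (G : SimpleGraph V) :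
    Polynomial ℝ :=
  letI := Classical.decRel G.Adj
  (G.adjMatrix ℝ).charpoly

open Polynomial

namespace Matrix

variable {n R : Type*} [Fintype n] [DecidableEq n] [CommRing R]

theorem charpoly_add_scalar (M : Matrix n n R) (μ : R) :
    (M + scalar n μ).charpoly = M.charpoly.comp (X - C μ) := by
  simpa [sub_eq_add_neg] using charpoly_sub_scalar M (-μ)

theorem charpoly_diagonal_mul_mul_diagonal {s : n → R} (hs : ∀ i, s i * s i = 1)
    (M : Matrix n n R) : (diagonal s * M * diagonal s).charpoly = M.charpoly := by
  rw [charpoly_mul_comm, ← Matrix.mul_assoc, diagonal_mul_diagonal, funext hs, diagonal_one,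
    Matrix.one_mul]

end Matrix

theorem Polynomial.comp_X_sub_C_injective {R : Type*} [CommRing R] (c : R) :
    Function.Injective fun p : R[X] => p.comp (X - C c) :=
  fun p q h => taylor_injective (-c) (by simpa [taylor_apply, sub_eq_add_neg] using h)

namespace SimpleGraph

open Matrix Finset

variable {V R : Type*} [Fintype V] [DecidableEq V] (G : SimpleGraph V) [DecidableRel G.Adj]

theorem diagonal_mul_lapMatrix_mul_diagonal [CommRing R] {s : V → R}
    (hs : ∀ v, s v * s v = 1) (hadj : ∀ u v, G.Adj u v → s u * s v = -1) :
    diagonal s * G.lapMatrix R * diagonal s = G.degMatrix R + G.adjMatrix R := by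
  ext a b
  rw [mul_diagonal, diagonal_mul]
  by_cases hab : a = b
  · subst hab
    simp [lapMatrix, degMatrix, mul_comm (s a), mul_assoc, hs]
  · by_cases h : G.Adj a b
    · simp [lapMatrix, degMatrix, hab, h, hadj a b h]
    · simp [lapMatrix, degMatrix, hab, h]

theorem Colorable.charpoly_lapMatrix [CommRing R] (hG : G.Colorable 2) :
    (G.lapMatrix R).charpoly = (G.degMatrix R + G.adjMatrix R).charpoly := by
  obtain ⟨c⟩ := hG
  let s : V → R := fun v => (-1) ^ (c v : ℕ)
  have hs : ∀ v, s v * s v = 1 := fun v => by simp [s, ← pow_add, ← two_mul]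
  have hadj : ∀ u v, G.Adj u v → s u * s v = -1 := by
    intro u v h
    have : (c u : ℕ) + c v = 1 := by have := c.valid h; omega
    simp [s, ← pow_add, this]
  rw [← diagonal_mul_lapMatrix_mul_diagonal G hs hadj, charpoly_diagonal_mul_mul_diagonal hs]

variable (R) in
abbrev edgeIncMatrix [Zero R] [One R] : Matrix V G.edgeSet R :=
  (G.incMatrix R).submatrix id (↑)

theorem edgeIncMatrix_mul_transpose [Semiring R] :
    G.edgeIncMatrix R * (G.edgeIncMatrix R)ᵀ = G.degMatrix R + G.adjMatrix R := by
  have hrestrict :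
      G.edgeIncMatrix R * (G.edgeIncMatrix R)ᵀ = G.incMatrix R * (G.incMatrix R)ᵀ := by
    ext a b
    simp only [mul_apply, submatrix_apply, transpose_apply, id]
    rw [Finset.sum_set_coe (f := fun e => G.incMatrix R a e * G.incMatrix R b e)]
    refine Finset.sum_subset (subset_univ _) fun e _ he => ?_
    rw [G.incMatrix_of_notMem_incidenceSet fun h => he (Set.mem_toFinset.mpr h.1), zero_mul]
  rw [hrestrict, incMatrix_mul_transpose]
  ext a b
  by_cases hab : a = b <;> simp [degMatrix, hab]

omit [DecidableRel G.Adj] in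
theorem card_common_vertices_of_ne [DecidableRel G.lineGraph.Adj] {e f : G.edgeSet}
    (hne : e ≠ f) :
    #{v | v ∈ (e : Sym2 V) ∧ v ∈ (f : Sym2 V)} = if G.lineGraph.Adj e f then 1 else 0 := by
  split_ifs with h
  · obtain ⟨-, v, hve, hvf⟩ := lineGraph_adj_iff_exists.mp h
    refine card_eq_one.mpr ⟨v, eq_singleton_iff_unique_mem.mpr ⟨by simp [hve, hvf], ?_⟩⟩
    intro w hw
    rw [mem_filter] at hw
    by_contra hwv
    exact hne (Subtype.ext (Sym2.eq_of_ne_mem hwv hw.2.1 hve hw.2.2 hvf))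
  · refine card_eq_zero.mpr (filter_eq_empty_iff.mpr fun v _ hv => h ?_)
    exact lineGraph_adj_iff_exists.mpr ⟨hne, v, hv⟩

theorem transpose_mul_edgeIncMatrix [Semiring R] [DecidableRel G.lineGraph.Adj] :
    (G.edgeIncMatrix R)ᵀ * G.edgeIncMatrix R = G.lineGraph.adjMatrix R + scalar _ 2 := by
  rw [transpose_submatrix, ← submatrix_mul _ _ _ _ _ Function.bijective_id]
  ext e f
  by_cases hef : e = f
  · subst hef
    simp [incMatrix_transpose_mul_diag, e.2]
  · have hinc : ∀ (v : V) (e : G.edgeSet),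
        G.incMatrix R v e = if v ∈ (e : Sym2 V) then 1 else 0 :=
      fun v e => by simp [incMatrix_apply', incidenceSet, e.2]
    simp only [submatrix_apply, mul_apply, transpose_apply, hinc, ite_zero_mul_ite_zero, one_mul,
      sum_boole, card_common_vertices_of_ne G hef]
    simp [hef]

theorem IsTree.charpoly_lapMatrix [CommRing R] [DecidableRel G.lineGraph.Adj] (hG : G.IsTree) :
    (G.lapMatrix R).charpoly = X * (G.lineGraph.adjMatrix R).charpoly.comp (X - C 2) := by
  have hcard : Fintype.card V = Fintype.card G.edgeSet + 1 := by
    rw [← hG.card_edgeFinset, edgeFinset, Set.toFinset_card]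
  rw [hG.colorable_two.charpoly_lapMatrix, ← edgeIncMatrix_mul_transpose,
    charpoly_mul_comm_of_le _ _ (by omega), transpose_mul_edgeIncMatrix, charpoly_add_scalar, hcard,
    Nat.add_sub_cancel_left, pow_one]

theorem lapCharpoly_eq_charpoly : lapCharpoly G = (G.lapMatrix ℝ).charpoly := by
  unfold lapCharpoly
  congr!

theorem adjCharpoly_eq_charpoly : adjCharpoly G = (G.adjMatrix ℝ).charpoly := by
  unfold adjCharpoly
  congr!

theorem IsTree.lapCharpoly_eq (hG : G.IsTree) :
    lapCharpoly G = X * (adjCharpoly G.lineGraph).comp (X - C 2) := by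
  classical
  rw [lapCharpoly_eq_charpoly, adjCharpoly_eq_charpoly, hG.charpoly_lapMatrix]

end SimpleGraph

/-- Two trees are Laplacian-cospectral if and only if their line graphs are
adjacency-cospectral. -/
theorem tree_lap_cospectral_iff_lineGraph_adj_cospectral
    {V V' : Type*} [Fintype V] [DecidableEq V] [Fintype V'] [DecidableEq V']
    (T : SimpleGraph V) (T' : SimpleGraph V')
    [DecidableRel T.Adj] [DecidableRel T'.Adj]
    (hT : T.IsTree) (hT' : T'.IsTree) :
    lapCharpoly T = lapCharpoly T' ↔ adjCharpoly T.lineGraph = adjCharpoly T'.lineGraph := by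
  rw [hT.lapCharpoly_eq, hT'.lapCharpoly_eq, isRegular_X.left.eq_iff]
  exact (comp_X_sub_C_injective 2).eq_iff
end

section
/- Let G and H be connected graphs whose line graphs are isomorphic, and suppose it is not the case that one of G, H is the triangle K₃ and the other is the star K_{1,3}. Then G and H are isomorphic. -/
/-!
Let `φ : L(G) ≃ L(H)`. Three edges at a vertex pairwise meet, so their images pairwise meet, and
hence either share a vertex or form a triangle.

If neither `φ` nor `φ⁻¹` ever sends a claw onto a triangle, then `φ` maps the star of each vertex
`v` of `G` onto the star of a vertex `c v` of `H`: the common vertex of the images when `v` has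
two edges, and for a pendant vertex the end of the image of its edge other than the image of its
neighbour. In a connected graph with two edges a vertex is determined by its star, so `c` is a
bijection, inverse to the map obtained from `φ⁻¹` in the same way, and `φ` is induced by it.

If `φ` sends the claw at `v` with leaves `u₁ u₂ u₃` onto the triangle `a b c`, an edge at `v`
meets all three claw edges, so its image is a triangle edge; an edge from a leaf to a new
vertex meets only one claw edge, whereas an edge of `H` meeting one triangle edge meets two. So
`G` lives on `v, u₁, u₂, u₃`. Either `G = K_{1,3}` and `H = K₃`, or there is an edge, say `u₁u₂`,
whose image is `bz` for a fourth vertex `z`; then `φ⁻¹` sends the claw at `b` onto the triangle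
`u₁ v u₂`, so `H` lives on `a, b, c, z`, and comparing the images of the leaf edges shows that
`v, u₁, u₂, u₃ ↦ b, a, c, z` is an isomorphism.
-/

open SimpleGraph

namespace SimpleGraph

variable {V W : Type*} {G : SimpleGraph V} {H : SimpleGraph W}

theorem _root_.Sym2.eq_of_mem_of_mem_of_ne {α : Type*} {z z' : Sym2 α} (hne : z ≠ z') {x y : α}
    (hx : x ∈ z) (hx' : x ∈ z') (hy : y ∈ z) (hy' : y ∈ z') : x = y := by
  by_contra h
  exact hne (Sym2.eq_of_ne_mem h hx hy hx' hy')

theorem _root_.Sym2.eq_or_eq_or_eq_of_mem_or_mem {α : Type*} {a b c : α} {z : Sym2 α} (hab : a ≠ b)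
    (hbc : b ≠ c) (hac : a ≠ c) (h₁ : a ∈ z ∨ b ∈ z) (h₂ : b ∈ z ∨ c ∈ z) (h₃ : a ∈ z ∨ c ∈ z) :
    z = s(a, b) ∨ z = s(b, c) ∨ z = s(a, c) := by
  have pair {x y : α} (hxy : x ≠ y) (hx : x ∈ z) (hy : y ∈ z) : z = s(x, y) :=
    (Sym2.mem_and_mem_iff hxy).1 ⟨hx, hy⟩
  rcases h₁ with ha | hb <;> rcases h₂ with hb' | hc
  · exact .inl (pair hab ha hb')
  · exact .inr (.inr (pair hac ha hc))
  · rcases h₃ with ha | hc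
    · exact .inl (pair hab ha hb)
    · exact .inr (.inl (pair hbc hb hc))
  · exact .inr (.inl (pair hbc hb hc))

theorem Connected.forall_mem_of_adj_mem (hG : G.Connected) {s : Set V}
    (hs : ∀ ⦃x y⦄, G.Adj x y → x ∈ s → y ∈ s) {v : V} (hv : v ∈ s) (x : V) : x ∈ s := by
  induction (reachable_iff_reflTransGen v x).1 (hG v x) with
  | refl => exact hv
  | tail _ hxy ih => exact hs hxy ih

theorem Connected.eq_or_eq_of_edgeSet_subset (hG : G.Connected) {x y : V}
    (h : G.edgeSet ⊆ {s(x, y)}) (v : V) : v = x ∨ v = y := by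
  refine hG.forall_mem_of_adj_mem (s := {x, y}) (fun p q hpq _ => ?_) (Set.mem_insert x {y}) v
  have : s(p, q) = s(x, y) := h hpq
  simp only [Sym2.eq_iff] at this
  simp only [Set.mem_insert_iff, Set.mem_singleton_iff]
  tauto

theorem Connected.edgeSet_subset_of_forall_adj (hG : G.Connected) {x y : V}
    (hx : ∀ w, G.Adj x w → w = y) (hy : ∀ w, G.Adj y w → w = x) : G.edgeSet ⊆ {s(x, y)} := by
  have hxy : ∀ v, v = x ∨ v = y := hG.forall_mem_of_adj_mem (s := {x, y}) (by
    rintro p q hpq (rfl | rfl)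
    exacts [.inr (hx q hpq), .inl (hy q hpq)]) (Set.mem_insert x {y})
  rintro e he
  induction e using Sym2.ind with | _ p q =>
  rcases hxy p with rfl | rfl
  · rw [hx q he]; rfl
  · rw [hy q he]; exact Sym2.eq_swap

theorem Connected.eq_of_forall_mem_iff (hG : G.Connected) (hE : G.edgeSet.Nontrivial) {x y : V}
    (h : ∀ e ∈ G.edgeSet, x ∈ e ↔ y ∈ e) : x = y := by
  by_contra hxy
  refine hE.not_subsingleton (Set.subsingleton_of_subset_singleton
    (hG.edgeSet_subset_of_forall_adj (x := x) (y := y) (fun w hw => ?_) (fun w hw => ?_)))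
  · have := (h _ hw).1 (Sym2.mem_mk_left x w)
    exact (Sym2.mem_iff.1 this).resolve_left (Ne.symm hxy) |>.symm
  · have := (h _ hw).2 (Sym2.mem_mk_left y w)
    exact (Sym2.mem_iff.1 this).resolve_left hxy |>.symm

theorem Connected.incidenceSet_nontrivial_or (hG : G.Connected) (hE : G.edgeSet.Nontrivial)
    {u v : V} (huv : G.Adj u v) :
    (G.incidenceSet u).Nontrivial ∨ (G.incidenceSet v).Nontrivial := by
  by_contra! h
  refine hE.not_subsingleton (Set.subsingleton_of_subset_singleton
    (hG.edgeSet_subset_of_forall_adj (x := u) (y := v) (fun w hw => ?_) (fun w hw => ?_)))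
  · exact Sym2.congr_right.1 (h.1 ⟨hw, Sym2.mem_mk_left u w⟩ ⟨huv, Sym2.mem_mk_left u v⟩)
  · exact Sym2.congr_right.1 (h.2 ⟨hw, Sym2.mem_mk_left v w⟩ ⟨huv.symm, Sym2.mem_mk_left v u⟩)

theorem nonempty_iso_of_bijective {α : Type*} {p : α → V} {q : α → W} (hp : p.Bijective)
    (hq : q.Bijective) (hpq : ∀ i j, G.Adj (p i) (p j) ↔ H.Adj (q i) (q j)) :
    Nonempty (G ≃g H) := by
  let e := (Equiv.ofBijective p hp).symm.trans (Equiv.ofBijective q hq)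
  have he : ∀ i, e (p i) = q i := fun i => by simp [e]
  refine ⟨⟨e, fun {x y} => ?_⟩⟩
  obtain ⟨i, rfl⟩ := hp.surjective x
  obtain ⟨j, rfl⟩ := hp.surjective y
  rw [he, he, hpq]

theorem nonempty_iso_of_edgeSet_subsingleton (φ : G.lineGraph ≃g H.lineGraph)
    (hG : G.Connected) (hH : H.Connected) (hE : G.edgeSet.Subsingleton) : Nonempty (G ≃g H) := by
  rcases isEmpty_or_nonempty G.edgeSet with hG₀ | ⟨⟨e, he⟩⟩
  · have hH₀ : IsEmpty H.edgeSet := (φ.toEquiv.isEmpty_congr).1 hG₀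
    obtain ⟨x⟩ := hG.nonempty
    obtain ⟨y⟩ := hH.nonempty
    have hV := hG.eq_or_eq_of_edgeSet_subset (x := x) (y := x)
      (by simp [Set.isEmpty_coe_sort.1 hG₀])
    have hW := hH.eq_or_eq_of_edgeSet_subset (x := y) (y := y)
      (by simp [Set.isEmpty_coe_sort.1 hH₀])
    refine nonempty_iso_of_bijective (p := fun _ : Unit => x) (q := fun _ : Unit => y)
      ⟨fun _ _ _ => rfl, fun v => ⟨(), ((hV v).elim id id).symm⟩⟩
      ⟨fun _ _ _ => rfl, fun w => ⟨(), ((hW w).elim id id).symm⟩⟩ (fun _ _ => by simp)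
  · induction e using Sym2.ind with | _ x y =>
    have hE' : H.edgeSet.Subsingleton :=
      (Set.subsingleton_coe _).1 (φ.toEquiv.subsingleton_congr.1 ((Set.subsingleton_coe _).2 hE))
    obtain ⟨r, t, hrt⟩ : ∃ r t, (φ ⟨s(x, y), he⟩ : Sym2 W) = s(r, t) :=
      (φ ⟨s(x, y), he⟩ : Sym2 W).ind fun r t => ⟨r, t, rfl⟩
    have hH₁ : H.Adj r t := by simpa [hrt] using (φ ⟨s(x, y), he⟩).2
    have hV := hG.eq_or_eq_of_edgeSet_subset fun f hf => hE hf he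
    have hW := hH.eq_or_eq_of_edgeSet_subset fun f hf => hrt ▸ hE' hf (φ ⟨s(x, y), he⟩).2
    have hG₁ : G.Adj x y := he
    refine nonempty_iso_of_bijective (p := ![x, y]) (q := ![r, t]) ⟨?_, ?_⟩ ⟨?_, ?_⟩ ?_
    · intro i j h
      fin_cases i <;> fin_cases j <;> simp_all [hG₁.ne, hG₁.ne.symm]
    · intro v
      rcases hV v with rfl | rfl
      exacts [⟨0, rfl⟩, ⟨1, rfl⟩]
    · intro i j h
      fin_cases i <;> fin_cases j <;> simp_all [hH₁.ne, hH₁.ne.symm]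
    · intro w
      rcases hW w with rfl | rfl
      exacts [⟨0, rfl⟩, ⟨1, rfl⟩]
    · intro i j
      fin_cases i <;> fin_cases j <;> simp [hG₁, hH₁, hG₁.symm, hH₁.symm]

section LineGraphIso

variable (φ : G.lineGraph ≃g H.lineGraph)

theorem exists_mem_lineGraphIso_iff (e f : G.edgeSet) :
    (∃ x, x ∈ (φ e : Sym2 W) ∧ x ∈ (φ f : Sym2 W)) ↔
      ∃ v, v ∈ (e : Sym2 V) ∧ v ∈ (f : Sym2 V) := by
  obtain rfl | hef := eq_or_ne e f
  · exact iff_of_true ⟨_, Sym2.out_fst_mem _, Sym2.out_fst_mem _⟩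
      ⟨_, Sym2.out_fst_mem _, Sym2.out_fst_mem _⟩
  · simpa [lineGraph_adj_iff_exists, hef] using φ.map_adj_iff (v := e) (w := f)

def MapsClawToTriangle : Prop :=
  ∃ v, ∃ e₁ e₂ e₃ : G.edgeSet, v ∈ (e₁ : Sym2 V) ∧ v ∈ (e₂ : Sym2 V) ∧ v ∈ (e₃ : Sym2 V) ∧
    ¬∃ x, x ∈ (φ e₁ : Sym2 W) ∧ x ∈ (φ e₂ : Sym2 W) ∧ x ∈ (φ e₃ : Sym2 W)

structure IsClawToTriangle (v u₁ u₂ u₃ : V) (a b c : W) : Prop where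
  adj₁ : G.Adj v u₁
  adj₂ : G.Adj v u₂
  adj₃ : G.Adj v u₃
  map₁ : (φ ⟨s(v, u₁), adj₁⟩ : Sym2 W) = s(a, b)
  map₂ : (φ ⟨s(v, u₂), adj₂⟩ : Sym2 W) = s(b, c)
  map₃ : (φ ⟨s(v, u₃), adj₃⟩ : Sym2 W) = s(a, c)

theorem mem_or_mem_iff_mem_or_mem {e f : G.edgeSet} {v u : V} {a b : W}
    (he : (e : Sym2 V) = s(v, u)) (hφe : (φ e : Sym2 W) = s(a, b)) :
    a ∈ (φ f : Sym2 W) ∨ b ∈ (φ f : Sym2 W) ↔ v ∈ (f : Sym2 V) ∨ u ∈ (f : Sym2 V) := by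
  have := exists_mem_lineGraphIso_iff φ f e
  rw [hφe, he] at this
  simpa [and_or_left, exists_or] using this

theorem coe_symm_apply_eq {e : G.edgeSet} {e' : H.edgeSet} (h : (φ e : Sym2 W) = e') :
    (φ.symm e' : Sym2 V) = e := by
  rw [show e' = φ e from Subtype.ext h.symm, RelIso.symm_apply_apply]

namespace IsClawToTriangle

variable {φ} {v u₁ u₂ u₃ : V} {a b c : W}

theorem swap₁₂ (hC : IsClawToTriangle φ v u₁ u₂ u₃ a b c) : IsClawToTriangle φ v u₂ u₁ u₃ c b a :=
  ⟨hC.adj₂, hC.adj₁, hC.adj₃, hC.map₂.trans Sym2.eq_swap, hC.map₁.trans Sym2.eq_swap,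
    hC.map₃.trans Sym2.eq_swap⟩

theorem swap₁₃ (hC : IsClawToTriangle φ v u₁ u₂ u₃ a b c) : IsClawToTriangle φ v u₃ u₂ u₁ a c b :=
  ⟨hC.adj₃, hC.adj₂, hC.adj₁, hC.map₃, hC.map₂.trans Sym2.eq_swap, hC.map₁⟩

theorem swap₂₃ (hC : IsClawToTriangle φ v u₁ u₂ u₃ a b c) : IsClawToTriangle φ v u₁ u₃ u₂ b a c :=
  ⟨hC.adj₁, hC.adj₃, hC.adj₂, hC.map₁.trans Sym2.eq_swap, hC.map₃, hC.map₂⟩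

theorem adj_ab (hC : IsClawToTriangle φ v u₁ u₂ u₃ a b c) : H.Adj a b := by
  simpa [hC.map₁] using (φ ⟨s(v, u₁), hC.adj₁⟩).2

theorem adj_bc (hC : IsClawToTriangle φ v u₁ u₂ u₃ a b c) : H.Adj b c := by
  simpa [hC.map₂] using (φ ⟨s(v, u₂), hC.adj₂⟩).2

theorem adj_ac (hC : IsClawToTriangle φ v u₁ u₂ u₃ a b c) : H.Adj a c := by
  simpa [hC.map₃] using (φ ⟨s(v, u₃), hC.adj₃⟩).2

theorem ne₁₂ (hC : IsClawToTriangle φ v u₁ u₂ u₃ a b c) : u₁ ≠ u₂ := by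
  rintro rfl
  have := hC.map₁.symm.trans hC.map₂
  simp [hC.adj_ab.ne, hC.adj_ac.ne] at this

theorem ne₁₃ (hC : IsClawToTriangle φ v u₁ u₂ u₃ a b c) : u₁ ≠ u₃ := hC.swap₂₃.ne₁₂
theorem ne₂₃ (hC : IsClawToTriangle φ v u₁ u₂ u₃ a b c) : u₂ ≠ u₃ := hC.swap₁₃.ne₁₂.symm

theorem mem_or_mem_iff₁ (hC : IsClawToTriangle φ v u₁ u₂ u₃ a b c) (f : G.edgeSet) :
    a ∈ (φ f : Sym2 W) ∨ b ∈ (φ f : Sym2 W) ↔ v ∈ (f : Sym2 V) ∨ u₁ ∈ (f : Sym2 V) :=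
  mem_or_mem_iff_mem_or_mem φ rfl hC.map₁

theorem mem_or_mem_iff₂ (hC : IsClawToTriangle φ v u₁ u₂ u₃ a b c) (f : G.edgeSet) :
    b ∈ (φ f : Sym2 W) ∨ c ∈ (φ f : Sym2 W) ↔ v ∈ (f : Sym2 V) ∨ u₂ ∈ (f : Sym2 V) :=
  mem_or_mem_iff_mem_or_mem φ rfl hC.map₂

theorem mem_or_mem_iff₃ (hC : IsClawToTriangle φ v u₁ u₂ u₃ a b c) (f : G.edgeSet) :
    a ∈ (φ f : Sym2 W) ∨ c ∈ (φ f : Sym2 W) ↔ v ∈ (f : Sym2 V) ∨ u₃ ∈ (f : Sym2 V) :=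
  mem_or_mem_iff_mem_or_mem φ rfl hC.map₃

theorem eq_of_adj_center (hC : IsClawToTriangle φ v u₁ u₂ u₃ a b c) {y : V} (hy : G.Adj v y) :
    y = u₁ ∨ y = u₂ ∨ y = u₃ := by
  set f : G.edgeSet := ⟨s(v, y), hy⟩
  have hv : v ∈ (f : Sym2 V) := Sym2.mem_mk_left v y
  have hf := Sym2.eq_or_eq_or_eq_of_mem_or_mem hC.adj_ab.ne hC.adj_bc.ne hC.adj_ac.ne
    ((hC.mem_or_mem_iff₁ f).2 (.inl hv)) ((hC.mem_or_mem_iff₂ f).2 (.inl hv))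
    ((hC.mem_or_mem_iff₃ f).2 (.inl hv))
  rw [← hC.map₁, ← hC.map₂, ← hC.map₃] at hf
  simpa only [Subtype.val_inj, φ.injective.eq_iff, f, Subtype.ext_iff, Sym2.congr_right] using hf

theorem eq_of_adj_leaf (hC : IsClawToTriangle φ v u₁ u₂ u₃ a b c) {y : V} (hy : G.Adj u₁ y) :
    y = v ∨ y = u₂ ∨ y = u₃ := by
  by_contra! hne
  have h₁ := (hC.mem_or_mem_iff₁ ⟨s(u₁, y), hy⟩).2 (.inr (Sym2.mem_mk_left u₁ y))
  have h₂ := (hC.mem_or_mem_iff₂ ⟨s(u₁, y), hy⟩).not.2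
  have h₃ := (hC.mem_or_mem_iff₃ ⟨s(u₁, y), hy⟩).not.2
  simp [hC.adj₁.ne, hC.ne₁₂.symm, hC.ne₁₃.symm, hne.1.symm, hne.2.1.symm, hne.2.2.symm] at h₂ h₃
  tauto

theorem eq_or_eq_or_eq_or_eq (hC : IsClawToTriangle φ v u₁ u₂ u₃ a b c) (hG : G.Connected)
    (x : V) : x = v ∨ x = u₁ ∨ x = u₂ ∨ x = u₃ := by
  refine hG.forall_mem_of_adj_mem (s := {v, u₁, u₂, u₃}) (fun x y hxy hx => ?_)
    (Set.mem_insert v _) x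
  simp only [Set.mem_insert_iff, Set.mem_singleton_iff] at hx ⊢
  rcases hx with rfl | rfl | rfl | rfl
  · have := hC.eq_of_adj_center hxy
    tauto
  · have := hC.eq_of_adj_leaf hxy
    tauto
  · have := hC.swap₁₂.eq_of_adj_leaf hxy
    tauto
  · have := hC.swap₁₃.eq_of_adj_leaf hxy
    tauto

theorem bijective (hC : IsClawToTriangle φ v u₁ u₂ u₃ a b c) (hG : G.Connected) :
    Function.Bijective ![v, u₁, u₂, u₃] := by
  refine ⟨fun i j h => ?_, fun x => ?_⟩
  · have := hC.adj₁.ne; have := hC.adj₂.ne; have := hC.adj₃.ne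
    have := hC.ne₁₂; have := hC.ne₁₃; have := hC.ne₂₃
    fin_cases i <;> fin_cases j <;> simp_all [eq_comm]
  · rcases hC.eq_or_eq_or_eq_or_eq hG x with rfl | rfl | rfl | rfl
    exacts [⟨0, rfl⟩, ⟨1, rfl⟩, ⟨2, rfl⟩, ⟨3, rfl⟩]

theorem exists_symm (hC : IsClawToTriangle φ v u₁ u₂ u₃ a b c) (h₁₂ : G.Adj u₁ u₂) :
    ∃ z, (φ ⟨s(u₁, u₂), h₁₂⟩ : Sym2 W) = s(b, z) ∧ IsClawToTriangle φ.symm b a c z u₁ v u₂ := by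
  have h₁ := (hC.mem_or_mem_iff₁ ⟨s(u₁, u₂), h₁₂⟩).2 (.inr (Sym2.mem_mk_left u₁ u₂))
  have h₃ := (hC.mem_or_mem_iff₃ ⟨s(u₁, u₂), h₁₂⟩).not.2
    (by simp [hC.adj₁.ne, hC.adj₂.ne, hC.ne₁₃.symm, hC.ne₂₃.symm])
  obtain ⟨z, hz⟩ := Sym2.mem_iff_exists.1 (h₁.resolve_left fun ha => h₃ (.inl ha))
  have hbz : H.Adj b z := by simpa [hz] using (φ ⟨s(u₁, u₂), h₁₂⟩).2
  exact ⟨z, hz, hC.adj_ab.symm, hC.adj_bc, hbz,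
    (coe_symm_apply_eq φ (hC.map₁.trans Sym2.eq_swap)).trans Sym2.eq_swap,
    coe_symm_apply_eq φ (e := ⟨s(v, u₂), hC.adj₂⟩) hC.map₂,
    coe_symm_apply_eq φ (e := ⟨s(u₁, u₂), h₁₂⟩) hz⟩

theorem map₁₃ (hC : IsClawToTriangle φ v u₁ u₂ u₃ a b c) {f g : G.edgeSet} {z : W}
    (hf : (f : Sym2 V) = s(u₁, u₂)) (hg : (g : Sym2 V) = s(u₁, u₃))
    (hz : (φ f : Sym2 W) = s(b, z)) : (φ g : Sym2 W) = s(a, z) := by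
  have hbc := (hC.mem_or_mem_iff₂ g).not.2
    (by simp [hg, hC.adj₁.ne, hC.adj₃.ne, hC.ne₁₂.symm, hC.ne₂₃])
  have ha := (hC.mem_or_mem_iff₁ g).2 (.inr (by simp [hg]))
  have hz' := (mem_or_mem_iff_mem_or_mem φ (f := g) hf hz).2 (.inl (by simp [hg]))
  have haz : a ≠ z := by
    rintro rfl
    refine (hC.mem_or_mem_iff₃ f).not.2 ?_ (.inl (by simp [hz]))
    simp [hf, hC.adj₁.ne, hC.adj₂.ne, hC.ne₁₃.symm, hC.ne₂₃.symm]
  exact (Sym2.mem_and_mem_iff haz).1 ⟨ha.resolve_right fun hb => hbc (.inl hb),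
    hz'.resolve_left fun hb => hbc (.inl hb)⟩

theorem nonempty_iso_of_adj₁₂ (hC : IsClawToTriangle φ v u₁ u₂ u₃ a b c) (hG : G.Connected)
    (hH : H.Connected) (h₁₂ : G.Adj u₁ u₂) : Nonempty (G ≃g H) := by
  obtain ⟨z, hz, hC'⟩ := hC.exists_symm h₁₂
  have hac : (φ.symm ⟨s(a, c), hC.adj_ac⟩ : Sym2 V) = s(v, u₃) :=
    coe_symm_apply_eq φ (e := ⟨s(v, u₃), hC.adj₃⟩) hC.map₃
  have h₁₃ : G.Adj u₁ u₃ ↔ H.Adj a z := by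
    refine ⟨fun h => ?_, fun h => ?_⟩
    · simpa [hC.map₁₃ (g := ⟨s(u₁, u₃), h⟩) rfl rfl hz] using (φ ⟨s(u₁, u₃), h⟩).2
    · simpa [hC'.map₁₃ (g := ⟨s(a, z), h⟩) rfl rfl hac] using (φ.symm ⟨s(a, z), h⟩).2
  have h₂₃ : G.Adj u₂ u₃ ↔ H.Adj c z := by
    refine ⟨fun h => ?_, fun h => ?_⟩
    · simpa [hC.swap₁₂.map₁₃ (g := ⟨s(u₂, u₃), h⟩) Sym2.eq_swap rfl hz] using
        (φ ⟨s(u₂, u₃), h⟩).2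
    · simpa [hC'.swap₁₂.map₁₃ (g := ⟨s(c, z), h⟩) Sym2.eq_swap rfl hac] using
        (φ.symm ⟨s(c, z), h⟩).2
  refine nonempty_iso_of_bijective (hC.bijective hG) (hC'.bijective hH) fun i j => ?_
  fin_cases i <;> fin_cases j <;>
    simp [hC.adj₁, hC.adj₂, hC.adj₃, hC'.adj₁.symm, hC'.adj₂, hC'.adj₃, h₁₂, hC.adj_ac, h₁₃, h₂₃,
      adj_comm]

theorem mem_of_not_adj (hC : IsClawToTriangle φ v u₁ u₂ u₃ a b c) (hG : G.Connected)
    (h₁₂ : ¬G.Adj u₁ u₂) (h₁₃ : ¬G.Adj u₁ u₃) (h₂₃ : ¬G.Adj u₂ u₃) (f : G.edgeSet) :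
    v ∈ (f : Sym2 V) := by
  obtain ⟨f, hf⟩ := f
  induction f using Sym2.ind with | _ p q =>
  replace hf : G.Adj p q := hf
  have hV := hC.eq_or_eq_or_eq_or_eq hG
  rcases hV p with rfl | rfl | rfl | rfl <;> rcases hV q with rfl | rfl | rfl | rfl <;>
    simp_all [adj_comm]

theorem nonempty_iso_completeBipartiteGraph (hC : IsClawToTriangle φ v u₁ u₂ u₃ a b c)
    (hG : G.Connected) (h₁₂ : ¬G.Adj u₁ u₂) (h₁₃ : ¬G.Adj u₁ u₃) (h₂₃ : ¬G.Adj u₂ u₃) :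
    Nonempty (G ≃g completeBipartiteGraph (Fin 1) (Fin 3)) := by
  refine nonempty_iso_of_bijective (hC.bijective hG)
    (q := ![.inl 0, .inr 0, .inr 1, .inr 2]) (by decide) fun i j => ?_
  fin_cases i <;> fin_cases j <;> simp [hC.adj₁, hC.adj₂, hC.adj₃, h₁₂, h₁₃, h₂₃, adj_comm]

theorem nonempty_iso_completeGraph (hC : IsClawToTriangle φ v u₁ u₂ u₃ a b c)
    (hH : H.Connected) (hv : ∀ f : G.edgeSet, v ∈ (f : Sym2 V)) :
    Nonempty (H ≃g completeGraph (Fin 3)) := by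
  have hW : ∀ x, x ∈ ({a, b, c} : Set W) := by
    refine hH.forall_mem_of_adj_mem (fun x y hxy _ => ?_) (Set.mem_insert a _)
    have hv' := hv (φ.symm ⟨s(x, y), hxy⟩)
    have := Sym2.eq_or_eq_or_eq_of_mem_or_mem hC.adj_ab.ne hC.adj_bc.ne hC.adj_ac.ne
      ((hC.mem_or_mem_iff₁ _).2 (.inl hv')) ((hC.mem_or_mem_iff₂ _).2 (.inl hv'))
      ((hC.mem_or_mem_iff₃ _).2 (.inl hv'))
    simp only [RelIso.apply_symm_apply, Sym2.eq_iff] at this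
    simp only [Set.mem_insert_iff, Set.mem_singleton_iff]
    tauto
  refine nonempty_iso_of_bijective (p := ![a, b, c]) ⟨fun i j h => ?_, fun x => ?_⟩
    Function.bijective_id fun i j => ?_
  · have := hC.adj_ab.ne; have := hC.adj_bc.ne; have := hC.adj_ac.ne
    fin_cases i <;> fin_cases j <;> simp_all [eq_comm]
  · simp only [Set.mem_insert_iff, Set.mem_singleton_iff] at hW
    rcases hW x with rfl | rfl | rfl
    exacts [⟨0, rfl⟩, ⟨1, rfl⟩, ⟨2, rfl⟩]
  · fin_cases i <;> fin_cases j <;>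
      simp [hC.adj_ab, hC.adj_bc, hC.adj_ac, hC.adj_ab.symm, hC.adj_bc.symm, hC.adj_ac.symm]

theorem nonempty_iso_or (hC : IsClawToTriangle φ v u₁ u₂ u₃ a b c) (hG : G.Connected)
    (hH : H.Connected) :
    Nonempty (G ≃g H) ∨ Nonempty (G ≃g completeBipartiteGraph (Fin 1) (Fin 3)) ∧
      Nonempty (H ≃g completeGraph (Fin 3)) := by
  by_cases h₁₂ : G.Adj u₁ u₂
  · exact .inl (hC.nonempty_iso_of_adj₁₂ hG hH h₁₂)
  by_cases h₁₃ : G.Adj u₁ u₃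
  · exact .inl (hC.swap₂₃.nonempty_iso_of_adj₁₂ hG hH h₁₃)
  by_cases h₂₃ : G.Adj u₂ u₃
  · exact .inl (hC.swap₁₃.nonempty_iso_of_adj₁₂ hG hH h₂₃.symm)
  exact .inr ⟨hC.nonempty_iso_completeBipartiteGraph hG h₁₂ h₁₃ h₂₃,
    hC.nonempty_iso_completeGraph hH (hC.mem_of_not_adj hG h₁₂ h₁₃ h₂₃)⟩

end IsClawToTriangle

theorem MapsClawToTriangle.exists_isClawToTriangle {φ : G.lineGraph ≃g H.lineGraph}
    (h : MapsClawToTriangle φ) : ∃ v u₁ u₂ u₃ a b c, IsClawToTriangle φ v u₁ u₂ u₃ a b c := by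
  obtain ⟨v, ⟨e₁, he₁⟩, ⟨e₂, he₂⟩, ⟨e₃, he₃⟩, hv₁, hv₂, hv₃, hno⟩ := h
  obtain ⟨b, hb₁, hb₂⟩ := (exists_mem_lineGraphIso_iff φ _ _).2 ⟨v, hv₁, hv₂⟩
  obtain ⟨a, ha₁, ha₃⟩ := (exists_mem_lineGraphIso_iff φ _ _).2 ⟨v, hv₁, hv₃⟩
  obtain ⟨c, hc₂, hc₃⟩ := (exists_mem_lineGraphIso_iff φ _ _).2 ⟨v, hv₂, hv₃⟩
  have hab : a ≠ b := by rintro rfl; exact hno ⟨a, ha₁, hb₂, ha₃⟩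
  have hbc : b ≠ c := by rintro rfl; exact hno ⟨b, hb₁, hb₂, hc₃⟩
  have hac : a ≠ c := by rintro rfl; exact hno ⟨a, ha₁, hc₂, ha₃⟩
  obtain ⟨u₁, rfl⟩ := Sym2.mem_iff_exists.1 hv₁
  obtain ⟨u₂, rfl⟩ := Sym2.mem_iff_exists.1 hv₂
  obtain ⟨u₃, rfl⟩ := Sym2.mem_iff_exists.1 hv₃
  exact ⟨v, u₁, u₂, u₃, a, b, c, he₁, he₂, he₃, (Sym2.mem_and_mem_iff hab).1 ⟨ha₁, hb₁⟩,
    (Sym2.mem_and_mem_iff hbc).1 ⟨hb₂, hc₂⟩, (Sym2.mem_and_mem_iff hac).1 ⟨ha₃, hc₃⟩⟩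

def MapsStar (v : V) (x : W) : Prop :=
  ∀ e : G.edgeSet, v ∈ (e : Sym2 V) ↔ x ∈ (φ e : Sym2 W)

variable {φ}

theorem mapsStar_symm_iff {v : V} {x : W} : MapsStar φ.symm x v ↔ MapsStar φ v x :=
  ⟨fun h e => by simpa using (h (φ e)).symm, fun h e => by simpa using (h (φ.symm e)).symm⟩

theorem MapsStar.eq (hH : H.Connected) (hE : H.edgeSet.Nontrivial) {v : V} {x y : W}
    (hx : MapsStar φ v x) (hy : MapsStar φ v y) : x = y :=
  hH.eq_of_forall_mem_iff hE fun e he => by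
    simpa using (hx (φ.symm ⟨e, he⟩)).symm.trans (hy (φ.symm ⟨e, he⟩))

theorem MapsStar.adj {u v : V} {x y : W} (hu : MapsStar φ u x) (hv : MapsStar φ v y)
    (hxy : x ≠ y) (h : G.Adj u v) : H.Adj x y := by
  have := (Sym2.mem_and_mem_iff hxy).1
    ⟨(hu ⟨s(u, v), h⟩).1 (Sym2.mem_mk_left u v), (hv ⟨s(u, v), h⟩).1 (Sym2.mem_mk_right u v)⟩
  simpa [this] using (φ ⟨s(u, v), h⟩).2

theorem exists_mapsStar_of_nontrivial (hφ : ¬MapsClawToTriangle φ)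
    (hψ : ¬MapsClawToTriangle φ.symm) {v : V} (hv : (G.incidenceSet v).Nontrivial) :
    ∃ x, MapsStar φ v x := by
  obtain ⟨e, ⟨he, hve⟩, f, ⟨hf, hvf⟩, hef⟩ := hv
  have hEF : (φ ⟨e, he⟩ : Sym2 W) ≠ φ ⟨f, hf⟩ := fun h =>
    hef (congrArg Subtype.val (φ.injective (Subtype.ext h)))
  obtain ⟨x, hxE, hxF⟩ := (exists_mem_lineGraphIso_iff φ ⟨e, he⟩ ⟨f, hf⟩).2 ⟨v, hve, hvf⟩
  refine ⟨x, fun g => ⟨fun hvg => ?_, fun hxg => ?_⟩⟩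
  · by_contra hxg
    refine hφ ⟨v, ⟨e, he⟩, ⟨f, hf⟩, g, hve, hvf, hvg, ?_⟩
    rintro ⟨y, hyE, hyF, hyg⟩
    exact hxg (Sym2.eq_of_mem_of_mem_of_ne hEF hyE hyF hxE hxF ▸ hyg)
  · by_contra hvg
    refine hψ ⟨x, φ ⟨e, he⟩, φ ⟨f, hf⟩, φ g, hxE, hxF, hxg, ?_⟩
    rintro ⟨w, hwE, hwF, hwg⟩
    simp only [RelIso.symm_apply_apply] at hwE hwF hwg
    exact hvg (Sym2.eq_of_mem_of_mem_of_ne hef hwE hwF hve hvf ▸ hwg)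

theorem exists_mapsStar (hG : G.Connected) (hE : G.edgeSet.Nontrivial)
    (hφ : ¬MapsClawToTriangle φ) (hψ : ¬MapsClawToTriangle φ.symm) (v : V) :
    ∃ x, MapsStar φ v x := by
  by_cases hv : (G.incidenceSet v).Nontrivial
  · exact exists_mapsStar_of_nontrivial hφ hψ hv
  have : Nontrivial V := by
    obtain ⟨e, he⟩ := hE.nonempty
    induction e using Sym2.ind with | _ p q => exact ⟨p, q, G.ne_of_adj he⟩
  obtain ⟨u, hvu⟩ := hG.preconnected.exists_adj_of_nontrivial v
  obtain ⟨y, hy⟩ :=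
    exists_mapsStar_of_nontrivial hφ hψ ((hG.incidenceSet_nontrivial_or hE hvu).resolve_left hv)
  obtain ⟨x, hx⟩ := Sym2.mem_iff_exists.1 ((hy ⟨s(v, u), hvu⟩).1 (Sym2.mem_mk_right v u))
  have hxy : y ≠ x := (show H.Adj y x by simpa [hx] using (φ ⟨s(v, u), hvu⟩).2).ne
  rw [Set.not_nontrivial_iff] at hv
  refine ⟨x, fun g => ⟨fun hvg => ?_, fun hxg => ?_⟩⟩
  · have : g = ⟨s(v, u), hvu⟩ := Subtype.ext (hv ⟨g.2, hvg⟩ ⟨hvu, Sym2.mem_mk_left v u⟩)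
    simp [this, hx]
  · by_contra hvg
    obtain ⟨w, hwg, hwE⟩ := (exists_mem_lineGraphIso_iff φ g ⟨s(v, u), hvu⟩).1
      ⟨x, hxg, by simp [hx]⟩
    rcases Sym2.mem_iff.1 hwE with rfl | hwu
    · exact hvg hwg
    · have : (φ g : Sym2 W) = φ ⟨s(v, u), hvu⟩ := by
        rw [hx]; exact (Sym2.mem_and_mem_iff hxy).1 ⟨(hy g).1 (hwu ▸ hwg), hxg⟩
      exact hvg (φ.injective (Subtype.ext this) ▸ Sym2.mem_mk_left v u)

theorem nonempty_iso_of_not_mapsClawToTriangle (hG : G.Connected) (hH : H.Connected)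
    (hE : G.edgeSet.Nontrivial) (hφ : ¬MapsClawToTriangle φ)
    (hψ : ¬MapsClawToTriangle φ.symm) : Nonempty (G ≃g H) := by
  have hE' : H.edgeSet.Nontrivial :=
    Set.nontrivial_coe_sort.1 (φ.toEquiv.nontrivial_congr.1 (Set.nontrivial_coe_sort.2 hE))
  choose c hc using exists_mapsStar hG hE hφ hψ
  choose d hd using exists_mapsStar (φ := φ.symm) hH hE' hψ hφ
  have hdc : ∀ v, d (c v) = v := fun v => (hd (c v)).eq hG hE (mapsStar_symm_iff.2 (hc v))
  have hcd : ∀ x, c (d x) = x := fun x => (hc (d x)).eq hH hE' (mapsStar_symm_iff.1 (hd x))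
  refine ⟨⟨⟨c, d, hdc, hcd⟩, fun {u v} => ⟨fun h => ?_, fun h => ?_⟩⟩⟩
  · simpa [hdc] using (hd (c u)).adj (hd (c v)) (by rw [hdc, hdc]; rintro rfl; exact h.ne rfl) h
  · exact (hc u).adj (hc v) (fun huv => h.ne (by simpa [hdc] using congrArg d huv)) h

end LineGraphIso

end SimpleGraph

theorem isomorphic_of_lineGraph_isomorphic_general
    {V W : Type*}
    (G : SimpleGraph V) (H : SimpleGraph W)
    (hG : G.Connected) (hH : H.Connected)
    (hiso : Nonempty (G.lineGraph ≃g H.lineGraph))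
    (hK : ¬((Nonempty (G ≃g completeGraph (Fin 3)) ∧
              Nonempty (H ≃g completeBipartiteGraph (Fin 1) (Fin 3))) ∨
            (Nonempty (H ≃g completeGraph (Fin 3)) ∧
              Nonempty (G ≃g completeBipartiteGraph (Fin 1) (Fin 3))))) :
    Nonempty (G ≃g H) := by
  obtain ⟨φ⟩ := hiso
  rcases G.edgeSet.subsingleton_or_nontrivial with hE | hE
  · exact nonempty_iso_of_edgeSet_subsingleton φ hG hH hE
  by_cases hφ : MapsClawToTriangle φ
  · obtain ⟨v, u₁, u₂, u₃, a, b, c, hC⟩ := hφ.exists_isClawToTriangle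
    rcases hC.nonempty_iso_or hG hH with h | ⟨hG₄, hH₃⟩
    exacts [h, (hK (.inr ⟨hH₃, hG₄⟩)).elim]
  by_cases hψ : MapsClawToTriangle φ.symm
  · obtain ⟨v, u₁, u₂, u₃, a, b, c, hC⟩ := hψ.exists_isClawToTriangle
    rcases hC.nonempty_iso_or hH hG with h | ⟨hH₄, hG₃⟩
    exacts [⟨h.some.symm⟩, (hK (.inl ⟨hG₃, hH₄⟩)).elim]
  exact nonempty_iso_of_not_mapsClawToTriangle hG hH hE hφ hψ

/-- Whitney's theorem: if two finite connected graphs have isomorphic line graphs, and it is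
not the case that one of them is the triangle `K₃` and the other the star `K_{1,3}`, then the
graphs themselves are isomorphic. -/
theorem isomorphic_of_lineGraph_isomorphic
    {V W : Type*} [Fintype V] [DecidableEq V] [Fintype W] [DecidableEq W]
    (G : SimpleGraph V) (H : SimpleGraph W)
    (hG : G.Connected) (hH : H.Connected)
    (hiso : Nonempty (G.lineGraph ≃g H.lineGraph))
    (hK : ¬((Nonempty (G ≃g completeGraph (Fin 3)) ∧
              Nonempty (H ≃g completeBipartiteGraph (Fin 1) (Fin 3))) ∨
            (Nonempty (H ≃g completeGraph (Fin 3)) ∧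
              Nonempty (G ≃g completeBipartiteGraph (Fin 1) (Fin 3))))) :
    Nonempty (G ≃g H) :=
  isomorphic_of_lineGraph_isomorphic_general G H hG hH hiso hK
end
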